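/- Composing the forward Toffoli ladder with XOR pre/post-processing computes the sum bits: for a, b ∈ {0,1}^n with carries c_i defined by c_0 = 0, c_{i+1} = a_i·b_i ⊕ (a_i ⊕ b_i)·c_i, the i-th bit of (a + b) mod 2^{n+1} equals a_i ⊕ b_i ⊕ c_i for 0 ≤ i ≤ n−1, and the n-th bit equals c_n. -/

import Mathlib

/-!
Ripple-carry addition: at position `j` the full adder turns `a_j + b_j + c_j` into the sum bit
`a_j ⊕ b_j ⊕ c_j` plus twice the next carry, so by induction
`∑_{j<n} a_j 2^j + ∑_{j<n} b_j 2^j = ∑_{j<n} (a_j ⊕ b_j ⊕ c_j) 2^j + c_n 2^n`.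
The right-hand side is a binary expansion of length `n + 1`, hence already reduced modulo
`2^(n+1)`, and its digits are read off one at a time.
-/

/-- The majority carry bits: `c_0 = 0` and `c_{i+1} = a_i·b_i ⊕ (a_i ⊕ b_i)·c_i`. -/
def carry (a b : ℕ → ZMod 2) : ℕ → ZMod 2
  | 0 => 0
  | i + 1 => a i * b i + (a i + b i) * carry a b i

section Digits

variable {β : ℕ} {f : ℕ → ℕ}

theorem sum_mul_pow_lt_pow (hf : ∀ j, f j < β) (m : ℕ) :
    ∑ j ∈ Finset.range m, f j * β ^ j < β ^ m := by
  induction m with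
  | zero => simp
  | succ m ih =>
    have := Nat.mul_le_mul_right (β ^ m) (hf m)
    rw [Finset.sum_range_succ, pow_succ, mul_comm _ β]
    linarith [Nat.succ_mul (f m) (β ^ m)]

theorem sum_mul_pow_div_pow_mod (hf : ∀ j, f j < β) {i m : ℕ} (him : i < m) :
    (∑ j ∈ Finset.range m, f j * β ^ j) / β ^ i % β = f i := by
  have hβ : 0 < β := (Nat.zero_le _).trans_lt (hf 0)
  induction m with
  | zero => exact absurd him (Nat.not_lt_zero i)
  | succ m ih =>
    rw [Finset.sum_range_succ]
    rcases (Nat.lt_succ_iff.mp him).lt_or_eq with him | rfl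
    · obtain ⟨k, rfl⟩ := Nat.exists_eq_add_of_lt him
      rw [show f (i + k + 1) * β ^ (i + k + 1) = β ^ i * (β * (f (i + k + 1) * β ^ k)) by ring,
        Nat.add_mul_div_left _ _ (pow_pos hβ i), Nat.add_mul_mod_self_left, ih him]
    · rw [Nat.add_mul_div_right _ _ (pow_pos hβ i), Nat.div_eq_of_lt (sum_mul_pow_lt_pow hf i),
        zero_add, Nat.mod_eq_of_lt (hf i)]

end Digits

theorem full_adder_val (x y z : ZMod 2) :
    x.val + y.val + z.val = (x + y + z).val + 2 * (x * y + (x + y) * z).val := by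
  revert x y z
  decide

theorem sum_add_sum_eq_sum_add_carry (a b : ℕ → ZMod 2) (n : ℕ) :
    ∑ j ∈ Finset.range n, (a j).val * 2 ^ j + ∑ j ∈ Finset.range n, (b j).val * 2 ^ j =
      ∑ j ∈ Finset.range n, (a j + b j + carry a b j).val * 2 ^ j + (carry a b n).val * 2 ^ n := by
  induction n with
  | zero => simp [carry]
  | succ n ih =>
    simp only [Finset.sum_range_succ, carry]
    linear_combination ih + 2 ^ n * full_adder_val (a n) (b n) (carry a b n)

def sumBit (a b : ℕ → ZMod 2) (n j : ℕ) : ZMod 2 :=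
  if j < n then a j + b j + carry a b j else carry a b n

theorem sum_add_sum_eq_sum_sumBit (a b : ℕ → ZMod 2) (n : ℕ) :
    ∑ j ∈ Finset.range n, (a j).val * 2 ^ j + ∑ j ∈ Finset.range n, (b j).val * 2 ^ j =
      ∑ j ∈ Finset.range (n + 1), (sumBit a b n j).val * 2 ^ j := by
  rw [sum_add_sum_eq_sum_add_carry, Finset.sum_range_succ]
  congr 1
  · refine Finset.sum_congr rfl fun j hj => ?_
    rw [sumBit, if_pos (Finset.mem_range.mp hj)]
  · rw [sumBit, if_neg (lt_irrefl n)]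

/-- The sum bits of `(a + b) mod 2^{n+1}`: the `i`-th bit equals `a_i ⊕ b_i ⊕ c_i` for
`0 ≤ i ≤ n−1`, and the `n`-th bit equals `c_n`. -/
theorem sum_bits_correct (n : ℕ) (a b : ℕ → ZMod 2) :
    (∀ i < n,
      ((∑ j ∈ Finset.range n, (a j).val * 2 ^ j) +
        (∑ j ∈ Finset.range n, (b j).val * 2 ^ j)) % 2 ^ (n + 1) / 2 ^ i % 2 =
        (a i + b i + carry a b i).val) ∧
    ((∑ j ∈ Finset.range n, (a j).val * 2 ^ j) +
        (∑ j ∈ Finset.range n, (b j).val * 2 ^ j)) % 2 ^ (n + 1) / 2 ^ n % 2 =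
      (carry a b n).val := by
  have hbit : ∀ j, (sumBit a b n j).val < 2 := fun j => ZMod.val_lt _
  rw [sum_add_sum_eq_sum_sumBit, Nat.mod_eq_of_lt (sum_mul_pow_lt_pow hbit _)]
  refine ⟨fun i hi => ?_, ?_⟩
  · rw [sum_mul_pow_div_pow_mod hbit (Nat.lt_succ_of_lt hi), sumBit, if_pos hi]
  · rw [sum_mul_pow_div_pow_mod hbit (Nat.lt_succ_self n), sumBit, if_neg (lt_irrefl n)]
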